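/- arXiv:1204.0380 — 4 statements merged into one kernel-verified Lean document; each statement's English description precedes it below -/
import Mathlib

section
/- Let A, B be n×n matrices. The Strang splitting satisfies the second-order error bound ||exp(t(A+B)) - exp(tA/2) exp(tB) exp(tA/2)|| ≤ C t^3 for all t in a bounded interval [0,T], with C depending only on ||A||, ||B||, T. -/
/-!
Let `e(t)` be the splitting error, `x = a / 2` and `K y = x y + y x`. Since
`d/dt exp(tx) = x exp(tx) = exp(tx) x`, the Leibniz rule gives the `k`-th derivative of
`exp(tx) exp(tb) exp(tx)` as `∑_{i+j=k} C(k,i) Kʲ (exp(tx) bⁱ exp(tb) exp(tx))`, which at `t = 0`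
is `∑ C(k,i) Kʲ(bⁱ)`. For `k ≤ 2` this equals `(2x + b)ᵏ = (a + b)ᵏ`, the `k`-th derivative of
`exp(t(a + b))` at `0` (for `k = 3` noncommutativity breaks the identity). So `e`, `e'` and `e''`
vanish at `0`, and three applications of the mean value inequality give
`‖e(t)‖ ≤ (sup ‖e‴‖ / 6) t³` on `[0, T]`.
-/

open NormedSpace Finset Set

section Taylor

variable {E : Type*} [NormedAddCommGroup E] [NormedSpace ℝ E]

theorem norm_le_div_mul_pow_succ_of_hasDerivAt {f f' : ℝ → E} {a b C : ℝ} {k : ℕ}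
    (hf : ∀ t ∈ Icc a b, HasDerivAt f (f' t) t) (ha : f a = 0)
    (hf' : ∀ t ∈ Icc a b, ‖f' t‖ ≤ C * (t - a) ^ k) :
    ∀ t ∈ Icc a b, ‖f t‖ ≤ C / (k + 1) * (t - a) ^ (k + 1) := by
  refine image_norm_le_of_norm_deriv_right_le_deriv_boundary
    (fun t ht => (hf t ht).continuousAt.continuousWithinAt)
    (fun t ht => (hf t (Ico_subset_Icc_self ht)).hasDerivWithinAt) (by simp [ha])
    (fun t => ?_) (fun t ht => hf' t (Ico_subset_Icc_self ht))
  refine ((((hasDerivAt_id' t).sub_const a).fun_pow (k + 1)).const_mul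
    (C / (k + 1))).congr_deriv ?_
  push_cast
  field_simp

theorem exists_norm_le_mul_pow_of_hasDerivAt {a b : ℝ} (n : ℕ) (f : ℕ → ℝ → E)
    (hf : ∀ i < n, ∀ t ∈ Icc a b, HasDerivAt (f i) (f (i + 1) t) t)
    (ha : ∀ i < n, f i a = 0) (hn : ContinuousOn (f n) (Icc a b)) :
    ∃ C, 0 ≤ C ∧ ∀ t ∈ Icc a b, ‖f 0 t‖ ≤ C * (t - a) ^ n := by
  induction n generalizing f with
  | zero =>
    obtain ⟨C, hC⟩ := isCompact_Icc.exists_bound_of_continuousOn hn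
    exact ⟨max C 0, le_max_right _ _, fun t ht => by
      rw [pow_zero, mul_one]; exact (hC t ht).trans (le_max_left _ _)⟩
  | succ n ih =>
    obtain ⟨C, hC, hbound⟩ := ih (fun i => f (i + 1))
      (fun i hi => hf (i + 1) (by omega)) (fun i hi => ha (i + 1) (by omega)) hn
    exact ⟨C / (n + 1), by positivity,
      norm_le_div_mul_pow_succ_of_hasDerivAt (hf 0 n.succ_pos) (ha 0 n.succ_pos) hbound⟩

end Taylor

noncomputable section

variable {𝔸 : Type*} [NormedRing 𝔸] [NormedAlgebra ℝ 𝔸]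

def mulLeftAddMulRight (x : 𝔸) : 𝔸 →L[ℝ] 𝔸 :=
  ContinuousLinearMap.mul ℝ 𝔸 x + (ContinuousLinearMap.mul ℝ 𝔸).flip x

@[simp]
theorem mulLeftAddMulRight_apply (x y : 𝔸) : mulLeftAddMulRight x y = x * y + y * x := rfl

def strangTerm (x b : 𝔸) (i : ℕ) (t : ℝ) : 𝔸 :=
  exp (t • x) * (b ^ i * exp (t • b)) * exp (t • x)

theorem strangTerm_zero (x b : 𝔸) (i : ℕ) : strangTerm x b i 0 = b ^ i := by
  simp [strangTerm]

def strangDeriv (x b : 𝔸) (k : ℕ) (t : ℝ) : 𝔸 :=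
  ∑ ij ∈ antidiagonal k, k.choose ij.1 • (mulLeftAddMulRight x ^ ij.2) (strangTerm x b ij.1 t)

theorem strangDeriv_zero (x b : 𝔸) :
    strangDeriv x b 0 = fun t => exp (t • x) * exp (t • b) * exp (t • x) := by
  ext t; simp [strangDeriv, strangTerm]

theorem strangDeriv_one_apply_zero (x b : 𝔸) : strangDeriv x b 1 0 = x + x + b := by
  simp [strangDeriv, strangTerm_zero, Finset.Nat.sum_antidiagonal_succ]

theorem strangDeriv_two_apply_zero (x b : 𝔸) : strangDeriv x b 2 0 = (x + x + b) ^ 2 := by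
  calc strangDeriv x b 2 0 = x * (x + x) + (x + x) * x + (2 * (x * b + b * x) + b ^ 2) := by
        simp [strangDeriv, strangTerm_zero, Finset.Nat.sum_antidiagonal_succ]
    _ = (x + x + b) ^ 2 := by noncomm_ring

variable [CompleteSpace 𝔸]

theorem hasDerivAt_strangTerm (x b : 𝔸) (i : ℕ) (t : ℝ) :
    HasDerivAt (strangTerm x b i)
      (mulLeftAddMulRight x (strangTerm x b i t) + strangTerm x b (i + 1) t) t := by
  have hE := hasDerivAt_exp_smul_const' x t
  have hF := (hasDerivAt_exp_smul_const' b t).const_mul (b ^ i)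
  refine ((hE.fun_mul hF).fun_mul (hasDerivAt_exp_smul_const x t)).congr_deriv ?_
  simp only [strangTerm, mulLeftAddMulRight_apply, pow_succ]
  noncomm_ring

theorem hasDerivAt_strangDeriv (x b : 𝔸) (k : ℕ) (t : ℝ) :
    HasDerivAt (strangDeriv x b k) (strangDeriv x b (k + 1) t) t := by
  set K := mulLeftAddMulRight x
  have hterm : ∀ i j, HasDerivAt (fun s => (K ^ j) (strangTerm x b i s))
      ((K ^ (j + 1)) (strangTerm x b i t) + (K ^ j) (strangTerm x b (i + 1) t)) t := by
    intro i j
    refine ((K ^ j).hasFDerivAt.comp_hasDerivAt t (hasDerivAt_strangTerm x b i t)).congr_deriv ?_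
    rw [map_add, pow_succ]
    rfl
  have hsum := HasDerivAt.fun_sum (u := antidiagonal k) fun ij _ =>
    (hterm ij.1 ij.2).const_smul (k.choose ij.1)
  refine hsum.congr_deriv ?_
  rw [strangDeriv, sum_antidiagonal_choose_succ_nsmul (fun i j => (K ^ j) (strangTerm x b i t)),
    ← sum_add_distrib]
  refine sum_congr rfl fun ij hij => ?_
  rw [smul_add, Nat.choose_symm_of_eq_add (mem_antidiagonal.1 hij).symm]

theorem exists_norm_exp_add_sub_strang_le (a b : 𝔸) (T : ℝ) :
    ∃ C : ℝ, 0 ≤ C ∧ ∀ t ∈ Icc (0 : ℝ) T,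
      ‖exp (t • (a + b)) - exp ((t / 2) • a) * exp (t • b) * exp ((t / 2) • a)‖ ≤ C * t ^ 3 := by
  set x := (2⁻¹ : ℝ) • a
  have hc : a + b = x + x + b := by rw [← add_smul]; norm_num
  have hx : ∀ t : ℝ, (t / 2) • a = t • x := fun t => by rw [smul_smul, div_eq_mul_inv]
  set c := x + x + b
  let e : ℕ → ℝ → 𝔸 := fun k t => exp (t • c) * c ^ k - strangDeriv x b k t
  have he : ∀ k t, HasDerivAt (e k) (e (k + 1) t) t := fun k t =>
    (((hasDerivAt_exp_smul_const c t).mul_const (c ^ k)).sub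
      (hasDerivAt_strangDeriv x b k t)).congr_deriv (by rw [mul_assoc, ← pow_succ'])
  have he0 : ∀ k < 3, e k 0 = 0 := by
    intro k hk
    interval_cases k <;>
      simp [e, strangDeriv_zero, strangDeriv_one_apply_zero, strangDeriv_two_apply_zero, c]
  obtain ⟨C, hC, hbound⟩ := exists_norm_le_mul_pow_of_hasDerivAt 3 e (fun k _ t _ => he k t) he0
    fun t _ => (he 3 t).continuousAt.continuousWithinAt
  refine ⟨C, hC, fun t ht => ?_⟩
  simpa [e, hc, hx, strangDeriv_zero, mul_assoc] using hbound t ht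

end

attribute [local instance] Matrix.linftyOpNormedAddCommGroup Matrix.linftyOpNormedRing
  Matrix.linftyOpNormedAlgebra

theorem stmt5_general (n : ℕ) (A B : Matrix (Fin n) (Fin n) ℂ) (T : ℝ) :
    ∃ C : ℝ, 0 ≤ C ∧ ∀ t ∈ Set.Icc (0 : ℝ) T,
      ‖NormedSpace.exp (t • (A + B)) -
        NormedSpace.exp ((t / 2) • A) * NormedSpace.exp (t • B) *
          NormedSpace.exp ((t / 2) • A)‖ ≤ C * t ^ 3 :=
  exists_norm_exp_add_sub_strang_le A B T

/-- Second-order Strang splitting error bound: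
    ‖exp(t(A+B)) − exp(tA/2)exp(tB)exp(tA/2)‖ ≤ C t³ on [0,T]. -/
theorem stmt5 (n : ℕ) (A B : Matrix (Fin n) (Fin n) ℂ) (T : ℝ) (hT : 0 < T) :
    ∃ C : ℝ, 0 ≤ C ∧ ∀ t ∈ Set.Icc (0 : ℝ) T,
      ‖NormedSpace.exp (t • (A + B)) -
        NormedSpace.exp ((t / 2) • A) * NormedSpace.exp (t • B) *
          NormedSpace.exp ((t / 2) • A)‖ ≤ C * t ^ 3 :=
  stmt5_general n A B T
end

section
/- Let A, B be bounded operators on a Banach space and let c solve c'(t) = (A+B)c(t), c(0) = c_0. Define the first iterative splitting approximation c_1 by c_1'(t) = A c_1(t) + B c_0 (with constant second argument, i.e., previous iterate c_0(t) ≡ c_0), c_1(0) = c_0. Then ||c(t) - c_1(t)|| ≤ C t^2 ||c_0|| for t in a bounded interval, with C depending only on ||A||, ||B||. -/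
/-! Subtracting the variation-of-constants formula for `c₁` from `exp (t • (A + B)) c₀`, the terms
of order `0` and `1` in `t` cancel. What remains are the second-order remainders of
`exp (t • (A + B))` and `exp (t • A)` and the integral of `(exp ((t - s) • A) - 1) (B c₀)`, each
`O(t²)` by the tail estimate `‖exp x - ∑_{i<k} xⁱ/i!‖ ≤ ‖x‖ᵏ exp ‖x‖`. -/

open NormedSpace

section ExpTail

variable {𝔸 : Type*} [NormedRing 𝔸] [NormedAlgebra ℝ 𝔸] [CompleteSpace 𝔸]

theorem norm_exp_sub_sum_range_le (x : 𝔸) {k : ℕ} (hk : k ≠ 0) :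
    ‖exp x - ∑ i ∈ Finset.range k, (i.factorial : ℝ)⁻¹ • x ^ i‖ ≤ ‖x‖ ^ k * Real.exp ‖x‖ := by
  have htail := (hasSum_nat_add_iff' k).mpr (exp_series_hasSum_exp' (𝕂 := ℝ) x)
  have hmajorant : HasSum (fun n : ℕ => ‖x‖ ^ k * (‖x‖ ^ n / n.factorial))
      (‖x‖ ^ k * Real.exp ‖x‖) := by
    rw [Real.exp_eq_exp_ℝ]
    exact (expSeries_div_hasSum_exp ‖x‖).mul_left _
  refine htail.norm_le_of_bounded hmajorant fun n => ?_
  calc ‖((n + k).factorial : ℝ)⁻¹ • x ^ (n + k)‖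
      ≤ ((n + k).factorial : ℝ)⁻¹ * ‖x‖ ^ (n + k) := by
        rw [norm_smul, Real.norm_of_nonneg (by positivity)]
        gcongr
        exact norm_pow_le' x (by omega)
    _ ≤ (n.factorial : ℝ)⁻¹ * ‖x‖ ^ (n + k) := by
        gcongr
        exact Nat.le_add_right n k
    _ = ‖x‖ ^ k * (‖x‖ ^ n / n.factorial) := by rw [pow_add]; ring

theorem norm_exp_sub_one_le (x : 𝔸) : ‖exp x - 1‖ ≤ ‖x‖ * Real.exp ‖x‖ := by
  simpa using norm_exp_sub_sum_range_le x one_ne_zero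

theorem norm_exp_sub_one_sub_le (x : 𝔸) : ‖exp x - 1 - x‖ ≤ ‖x‖ ^ 2 * Real.exp ‖x‖ := by
  simpa [Finset.sum_range_succ, sub_sub] using norm_exp_sub_sum_range_le x two_ne_zero

end ExpTail

section Splitting

variable {X : Type*} [NormedAddCommGroup X] [NormedSpace ℝ X] [CompleteSpace X]

theorem norm_exp_smul_sub_one_sub_apply_le (t : ℝ) (A : X →L[ℝ] X) (v : X) :
    ‖(exp (t • A) - 1 - t • A) v‖ ≤ t ^ 2 * ‖A‖ ^ 2 * Real.exp (|t| * ‖A‖) * ‖v‖ := by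
  calc ‖(exp (t • A) - 1 - t • A) v‖ ≤ ‖exp (t • A) - 1 - t • A‖ * ‖v‖ := ContinuousLinearMap.le_opNorm _ v
    _ ≤ ‖t • A‖ ^ 2 * Real.exp ‖t • A‖ * ‖v‖ := by gcongr; exact norm_exp_sub_one_sub_le _
    _ = t ^ 2 * ‖A‖ ^ 2 * Real.exp (|t| * ‖A‖) * ‖v‖ := by
        rw [norm_smul, Real.norm_eq_abs, mul_pow, sq_abs]

theorem norm_integral_exp_smul_sub_one_apply_le {t : ℝ} (ht : 0 ≤ t) (A : X →L[ℝ] X) (v : X) :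
    ‖∫ s in (0 : ℝ)..t, (exp ((t - s) • A) - 1) v‖ ≤ t ^ 2 * ‖A‖ * Real.exp (t * ‖A‖) * ‖v‖ := by
  have hbound : ∀ s ∈ Set.uIoc 0 t,
      ‖(exp ((t - s) • A) - 1) v‖ ≤ t * ‖A‖ * Real.exp (t * ‖A‖) * ‖v‖ := by
    rintro s ⟨hs0, hst⟩
    rw [min_eq_left ht] at hs0
    rw [max_eq_right ht] at hst
    have hnorm : ‖(t - s) • A‖ ≤ t * ‖A‖ := by
      rw [norm_smul, Real.norm_of_nonneg (by linarith)]
      gcongr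
      linarith
    calc ‖(exp ((t - s) • A) - 1) v‖ ≤ ‖exp ((t - s) • A) - 1‖ * ‖v‖ := ContinuousLinearMap.le_opNorm _ v
      _ ≤ ‖(t - s) • A‖ * Real.exp ‖(t - s) • A‖ * ‖v‖ := by
          gcongr; exact norm_exp_sub_one_le _
      _ ≤ t * ‖A‖ * Real.exp (t * ‖A‖) * ‖v‖ := by gcongr
  calc ‖∫ s in (0 : ℝ)..t, (exp ((t - s) • A) - 1) v‖
      ≤ t * ‖A‖ * Real.exp (t * ‖A‖) * ‖v‖ * |t - 0| :=
        intervalIntegral.norm_integral_le_of_norm_le_const hbound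
    _ = t ^ 2 * ‖A‖ * Real.exp (t * ‖A‖) * ‖v‖ := by
        rw [sub_zero, abs_of_nonneg ht]; ring

theorem exp_smul_add_apply_sub_splitting (t : ℝ) (A B : X →L[ℝ] X) (c₀ : X) :
    exp (t • (A + B)) c₀ - (exp (t • A) c₀ + ∫ s in (0 : ℝ)..t, exp ((t - s) • A) (B c₀))
      = (exp (t • (A + B)) - 1 - t • (A + B)) c₀ - (exp (t • A) - 1 - t • A) c₀
        - ∫ s in (0 : ℝ)..t, (exp ((t - s) • A) - 1) (B c₀) := by
  have hexp : Continuous (exp : (X →L[ℝ] X) → X →L[ℝ] X) :=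
    continuous_iff_continuousAt.2 fun x => (exp_analytic (𝕂 := ℝ) x).continuousAt
  have hcont : Continuous fun s : ℝ => exp ((t - s) • A) (B c₀) := by fun_prop
  simp only [sub_apply, one_apply_eq_self, smul_apply, add_apply,
    intervalIntegral.integral_sub (hcont.intervalIntegrable 0 t) intervalIntegrable_const,
    intervalIntegral.integral_const, sub_zero, smul_add]
  abel


theorem norm_exp_smul_add_apply_sub_splitting_le {t : ℝ} (ht : 0 ≤ t) (A B : X →L[ℝ] X) (c₀ : X) :
    ‖exp (t • (A + B)) c₀ - (exp (t • A) c₀ + ∫ s in (0 : ℝ)..t, exp ((t - s) • A) (B c₀))‖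
      ≤ 3 * (‖A‖ + ‖B‖) ^ 2 * Real.exp (t * (‖A‖ + ‖B‖)) * t ^ 2 * ‖c₀‖ := by
  set K := ‖A‖ + ‖B‖
  have hA : ‖A‖ ≤ K := le_add_of_nonneg_right (norm_nonneg B)
  have hB : ‖B‖ ≤ K := le_add_of_nonneg_left (norm_nonneg A)
  have hAB : ‖A + B‖ ≤ K := norm_add_le A B
  have h₁ := norm_exp_smul_sub_one_sub_apply_le t (A + B) c₀
  have h₂ := norm_exp_smul_sub_one_sub_apply_le t A c₀
  have h₃ := norm_integral_exp_smul_sub_one_apply_le ht A (B c₀)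
  rw [abs_of_nonneg ht] at h₁ h₂
  have hBc₀ : ‖B c₀‖ ≤ K * ‖c₀‖ := (B.le_opNorm c₀).trans (by gcongr)
  rw [exp_smul_add_apply_sub_splitting]
  calc _ ≤ t ^ 2 * K ^ 2 * Real.exp (t * K) * ‖c₀‖ + t ^ 2 * K ^ 2 * Real.exp (t * K) * ‖c₀‖
        + t ^ 2 * K * Real.exp (t * K) * (K * ‖c₀‖) :=
      norm_sub_le_of_le (norm_sub_le_of_le (h₁.trans (by gcongr)) (h₂.trans (by gcongr)))
        (h₃.trans (by gcongr))
    _ = 3 * K ^ 2 * Real.exp (t * K) * t ^ 2 * ‖c₀‖ := by ring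

end Splitting

theorem stmt7_general (X : Type*) [NormedAddCommGroup X] [NormedSpace ℝ X] [CompleteSpace X]
    (A B : X →L[ℝ] X) (c₀ : X) (T : ℝ)
    (c₁ : ℝ → X)
    (hc₁ : ∀ t : ℝ, c₁ t = NormedSpace.exp (t • A) c₀ +
      ∫ s in (0 : ℝ)..t, NormedSpace.exp ((t - s) • A) (B c₀)) :
    ∃ C : ℝ, 0 ≤ C ∧ ∀ t ∈ Set.Icc (0 : ℝ) T,
      ‖NormedSpace.exp (t • (A + B)) c₀ - c₁ t‖ ≤ C * t ^ 2 * ‖c₀‖ := by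
  set K := ‖A‖ + ‖B‖
  refine ⟨3 * K ^ 2 * Real.exp (T * K), by positivity, fun t ⟨ht0, htT⟩ => ?_⟩
  rw [hc₁]
  refine (norm_exp_smul_add_apply_sub_splitting_le ht0 A B c₀).trans ?_
  gcongr

/-- First iterative-splitting approximation
    c₁(t) = exp(tA)c₀ + ∫₀ᵗ exp((t−s)A) B c₀ ds satisfies
    ‖exp(t(A+B))c₀ − c₁(t)‖ ≤ C t² ‖c₀‖ on a bounded interval. -/
theorem stmt7 (X : Type*) [NormedAddCommGroup X] [NormedSpace ℝ X] [CompleteSpace X]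
    (A B : X →L[ℝ] X) (c₀ : X) (T : ℝ) (hT : 0 < T)
    (c₁ : ℝ → X)
    (hc₁ : ∀ t : ℝ, c₁ t = NormedSpace.exp (t • A) c₀ +
      ∫ s in (0 : ℝ)..t, NormedSpace.exp ((t - s) • A) (B c₀)) :
    ∃ C : ℝ, 0 ≤ C ∧ ∀ t ∈ Set.Icc (0 : ℝ) T,
      ‖NormedSpace.exp (t • (A + B)) c₀ - c₁ t‖ ≤ C * t ^ 2 * ‖c₀‖ :=
  stmt7_general X A B c₀ T c₁ hc₁
end

section
/- Let A, B be bounded operators on a Banach space. Define the iterative splitting sequence by c_i'(t) = A c_i(t) + B c_{i-1}(t), c_i(0) = c_0, with initial guess c_0(t) = exp(t(A+B)) c_0 replaced by any function c_0(·). Then the error e_i(t) = c(t) - c_i(t), where c(t) = exp(t(A+B))c_0, satisfies the recursion e_i(t) = ∫_0^t exp((t-s)A) B e_{i-1}(s) ds, and hence ||e_i(t)|| ≤ (K t)^i / i! · sup_{s∈[0,t]} ||e_0(s)|| for K = e^{t||A||} ||B||. -/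
/-!
The exact solution `u(s) = exp(s(A+B)) c₀` solves `u' = A u + B u`, so by the variation of constants
formula it satisfies `u(t) = exp(tA) c₀ + ∫₀ᵗ exp((t-s)A) B u(s) ds`, the same fixed-point equation
the iterates satisfy with `u` in place of `c_{i-1}`. Subtracting gives the error recursion. Since
`‖exp((t-s)A)‖ ≤ e^{t‖A‖}` for `0 ≤ s ≤ t`, the errors obey the Volterra inequality
`‖e_{i+1}(s)‖ ≤ K ∫₀ˢ ‖e_i‖`, and iterating it from `‖e_0‖ ≤ sup_{[0,t]} ‖e_0‖` yields the
factor `(Ks)^i / i!`.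
-/

open scoped Nat
open NormedSpace Set MeasureTheory

theorem norm_exp_le_exp_norm_of_norm_one_le {𝔸 : Type*} [NormedRing 𝔸] [NormedAlgebra ℝ 𝔸]
    (h1 : ‖(1 : 𝔸)‖ ≤ 1) (x : 𝔸) : ‖exp x‖ ≤ Real.exp ‖x‖ := by
  rw [exp_eq_tsum ℝ, Real.exp_eq_exp_ℝ, exp_eq_tsum ℝ]
  refine (norm_tsum_le_tsum_norm (norm_expSeries_summable' x)).trans <|
    (norm_expSeries_summable' x).tsum_le_tsum (fun n => ?_) (expSeries_summable' ‖x‖)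
  rw [norm_smul, smul_eq_mul, Real.norm_of_nonneg (by positivity)]
  gcongr
  cases n with
  | zero => simpa using h1
  | succ n => exact norm_pow_le' x n.succ_pos

theorem continuous_exp_smul {𝕂 𝔸 : Type*} [RCLike 𝕂] [NormedRing 𝔸] [NormedAlgebra 𝕂 𝔸]
    [CompleteSpace 𝔸] (x : 𝔸) : Continuous fun t : 𝕂 => exp (t • x) :=
  (differentiable_exp_smul_const 𝕂 x).continuous

section Duhamel

variable {X : Type*} [NormedAddCommGroup X] [NormedSpace ℝ X]

noncomputable def duhamelIntegral (A : X →L[ℝ] X) (g : ℝ → X) (t : ℝ) : X :=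
  ∫ s in (0 : ℝ)..t, exp ((t - s) • A) (g s)

theorem norm_duhamelIntegral_le (A : X →L[ℝ] X) {g : ℝ → X} {b : ℝ → ℝ} {t : ℝ} (ht : 0 ≤ t)
    (hgb : ∀ s ∈ Icc 0 t, ‖g s‖ ≤ b s) (hb : IntervalIntegrable b volume 0 t) :
    ‖duhamelIntegral A g t‖ ≤ Real.exp (t * ‖A‖) * ∫ s in 0..t, b s := by
  rw [← intervalIntegral.integral_const_mul]
  refine intervalIntegral.norm_integral_le_of_norm_le ht (ae_of_all _ fun s hs => ?_)
    (hb.const_mul _)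
  have hexp : ‖exp ((t - s) • A)‖ ≤ Real.exp (t * ‖A‖) := by
    refine (norm_exp_le_exp_norm_of_norm_one_le ContinuousLinearMap.norm_id_le _).trans ?_
    rw [Real.exp_le_exp, norm_smul, Real.norm_of_nonneg (by linarith [hs.2])]
    gcongr
    linarith [hs.1]
  calc ‖exp ((t - s) • A) (g s)‖ ≤ ‖exp ((t - s) • A)‖ * ‖g s‖ := ContinuousLinearMap.le_opNorm _ _
    _ ≤ Real.exp (t * ‖A‖) * b s :=
      mul_le_mul hexp (hgb s (Ioc_subset_Icc_self hs)) (norm_nonneg _) (Real.exp_pos _).le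

variable [CompleteSpace X]

theorem continuous_duhamelIntegral (A : X →L[ℝ] X) {g : ℝ → X} (hg : Continuous g) :
    Continuous (duhamelIntegral A g) :=
  intervalIntegral.continuous_parametric_intervalIntegral_of_continuous
    (((continuous_exp_smul A).comp (continuous_fst.sub continuous_snd)).clm_apply
      (hg.comp continuous_snd)) continuous_id

theorem duhamelIntegral_sub (A : X →L[ℝ] X) {f g : ℝ → X} (hf : Continuous f)
    (hg : Continuous g) (t : ℝ) :
    duhamelIntegral A f t - duhamelIntegral A g t = duhamelIntegral A (fun s => f s - g s) t := by
  have hint : ∀ {h : ℝ → X}, Continuous h →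
      IntervalIntegrable (fun s => exp ((t - s) • A) (h s)) volume 0 t := fun hh =>
    (((continuous_exp_smul A).comp (continuous_const.sub continuous_id)).clm_apply
      hh).intervalIntegrable 0 t
  simp only [duhamelIntegral, ← intervalIntegral.integral_sub (hint hf) (hint hg), map_sub]

theorem eq_exp_smul_add_duhamelIntegral (A : X →L[ℝ] X) {u g : ℝ → X} (hg : Continuous g)
    (hu : ∀ s, HasDerivAt u (A (u s) + g s) s) (t : ℝ) :
    u t = exp (t • A) (u 0) + duhamelIntegral A g t := by
  have hderiv : ∀ s, HasDerivAt (fun s => exp ((t - s) • A) (u s)) (exp ((t - s) • A) (g s)) s := by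
    intro s
    have hexp : HasDerivAt (fun s : ℝ => exp ((t - s) • A)) (-(A * exp ((t - s) • A))) s := by
      simpa [Function.comp_def] using
        (hasDerivAt_exp_smul_const' (𝕂 := ℝ) A (t - s)).scomp s ((hasDerivAt_id s).const_sub t)
    have hcomm : A * exp ((t - s) • A) = exp ((t - s) • A) * A :=
      (((Commute.refl A).smul_right (t - s)).exp_right).eq
    convert hexp.clm_apply (hu s) using 1
    rw [hcomm, map_add, neg_apply, mul_apply_eq_comp]
    abel
  have hint : IntervalIntegrable (fun s => exp ((t - s) • A) (g s)) volume 0 t :=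
    (((continuous_exp_smul A).comp (continuous_const.sub continuous_id)).clm_apply
      hg).intervalIntegrable 0 t
  rw [duhamelIntegral, intervalIntegral.integral_eq_sub_of_hasDerivAt (fun s _ => hderiv s) hint]
  simp

theorem exp_smul_add_apply_eq_add_duhamelIntegral (A B : X →L[ℝ] X) (x : X) (t : ℝ) :
    exp (t • (A + B)) x =
      exp (t • A) x + duhamelIntegral A (fun s => B (exp (s • (A + B)) x)) t := by
  have hsol : ∀ s : ℝ, HasDerivAt (fun s => exp (s • (A + B)) x)
      (A (exp (s • (A + B)) x) + B (exp (s • (A + B)) x)) s := fun s => by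
    convert (hasDerivAt_exp_smul_const' (A + B) s).clm_apply (hasDerivAt_const s x) using 1
    rw [map_zero, add_zero, mul_apply_eq_comp, add_apply]
  have := eq_exp_smul_add_duhamelIntegral A (g := fun s => B (exp (s • (A + B)) x))
    (B.continuous.comp ((continuous_exp_smul (A + B)).clm_apply continuous_const)) hsol t
  rwa [zero_smul, exp_zero, one_apply_eq_self] at this

end Duhamel

theorem le_pow_div_factorial_mul_of_le_mul_integral {u : ℕ → ℝ → ℝ} {K M T : ℝ} (hK : 0 ≤ K)
    (hu : ∀ i, IntervalIntegrable (u i) volume 0 T) (h0 : ∀ s ∈ Icc 0 T, u 0 s ≤ M)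
    (hstep : ∀ i, ∀ s ∈ Icc 0 T, u (i + 1) s ≤ K * ∫ r in 0..s, u i r) :
    ∀ i, ∀ s ∈ Icc 0 T, u i s ≤ (K * s) ^ i / i ! * M := by
  intro i
  induction i with
  | zero => simpa using h0
  | succ i ih =>
    intro s hs
    have hint : IntervalIntegrable (u i) volume 0 s :=
      (hu i).mono_set <| by
        rw [uIcc_of_le hs.1, uIcc_of_le (hs.1.trans hs.2)]
        exact Icc_subset_Icc_right hs.2
    calc u (i + 1) s ≤ K * ∫ r in 0..s, u i r := hstep i s hs
      _ ≤ K * ∫ r in 0..s, (K * r) ^ i / i ! * M := by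
        gcongr
        exact intervalIntegral.integral_mono_on hs.1 hint
          ((by fun_prop : Continuous _).intervalIntegrable 0 s) fun r hr =>
            ih r ⟨hr.1, hr.2.trans hs.2⟩
      _ = (K * s) ^ (i + 1) / (i + 1)! * M := by
        have hsplit : ∀ r : ℝ, (K * r) ^ i / i ! * M = K ^ i / i ! * M * r ^ i := fun r => by ring
        simp_rw [hsplit, intervalIntegral.integral_const_mul, integral_pow, Nat.factorial_succ]
        push_cast
        field_simp
        ring

section Splitting

variable {X : Type*} [NormedAddCommGroup X] [NormedSpace ℝ X] {A B : X →L[ℝ] X} {c₀ : X}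
  {c : ℕ → ℝ → X}

theorem norm_splitting_error_le {e : ℕ → ℝ → X} (he_cont : ∀ i, Continuous (e i))
    (herr : ∀ i t, e (i + 1) t = duhamelIntegral A (fun s => B (e i s)) t) {t : ℝ} (ht : 0 ≤ t)
    (i : ℕ) :
    ‖e i t‖ ≤ (Real.exp (t * ‖A‖) * ‖B‖ * t) ^ i / i ! * ⨆ s : Icc (0 : ℝ) t, ‖e 0 s‖ := by
  have hbdd : BddAbove (range fun s : Icc (0 : ℝ) t => ‖e 0 s‖) :=
    (isCompact_range ((he_cont 0).norm.comp continuous_subtype_val)).bddAbove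
  refine le_pow_div_factorial_mul_of_le_mul_integral (u := fun i s => ‖e i s‖) (by positivity)
    (fun i => (he_cont i).norm.intervalIntegrable 0 t) (fun s hs => le_ciSup hbdd ⟨s, hs⟩)
    (fun i s hs => ?_) i t ⟨ht, le_rfl⟩
  have hint : IntervalIntegrable (fun r => ‖e i r‖) volume 0 s :=
    (he_cont i).norm.intervalIntegrable 0 s
  have hint_nonneg : 0 ≤ ∫ r in 0..s, ‖e i r‖ :=
    intervalIntegral.integral_nonneg hs.1 fun r _ => norm_nonneg _
  calc ‖e (i + 1) s‖ ≤ Real.exp (s * ‖A‖) * ∫ r in 0..s, ‖B‖ * ‖e i r‖ := by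
        rw [herr]
        exact norm_duhamelIntegral_le A hs.1 (fun r _ => B.le_opNorm _) (hint.const_mul _)
    _ ≤ Real.exp (t * ‖A‖) * ‖B‖ * ∫ r in 0..s, ‖e i r‖ := by
        rw [intervalIntegral.integral_const_mul, ← mul_assoc]
        gcongr
        exact hs.2

variable [CompleteSpace X]

theorem continuous_splitting_iterate (hcont : Continuous (c 0))
    (hrec : ∀ i t, c (i + 1) t = exp (t • A) c₀ + duhamelIntegral A (fun s => B (c i s)) t) :
    ∀ i, Continuous (c i) := by
  intro i
  induction i with
  | zero => exact hcont
  | succ i ih =>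
    rw [funext (hrec i)]
    exact ((continuous_exp_smul A).clm_apply continuous_const).add
      (continuous_duhamelIntegral A (B.continuous.comp ih))

theorem splitting_error_succ {i : ℕ} (hc : Continuous (c i))
    (hrec : ∀ t, c (i + 1) t = exp (t • A) c₀ + duhamelIntegral A (fun s => B (c i s)) t) (t : ℝ) :
    exp (t • (A + B)) c₀ - c (i + 1) t =
      duhamelIntegral A (fun s => B (exp (s • (A + B)) c₀ - c i s)) t := by
  rw [hrec, exp_smul_add_apply_eq_add_duhamelIntegral, add_sub_add_left_eq_sub,
    duhamelIntegral_sub A (f := fun s => B (exp (s • (A + B)) c₀)) (g := fun s => B (c i s))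
      (B.continuous.comp ((continuous_exp_smul _).clm_apply continuous_const))
      (B.continuous.comp hc)]
  simp only [map_sub]

end Splitting

theorem stmt8_general (X : Type*) [NormedAddCommGroup X] [NormedSpace ℝ X] [CompleteSpace X]
    (A B : X →L[ℝ] X) (c₀ : X)
    (c : ℕ → ℝ → X) (hcont : Continuous (c 0))
    (hrec : ∀ i : ℕ, ∀ t : ℝ, c (i + 1) t = NormedSpace.exp (t • A) c₀ +
      ∫ s in (0 : ℝ)..t, NormedSpace.exp ((t - s) • A) (B (c i s)))
    (e : ℕ → ℝ → X)
    (he : ∀ i : ℕ, ∀ t : ℝ, e i t = NormedSpace.exp (t • (A + B)) c₀ - c i t) :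
    ∀ i : ℕ, ∀ t : ℝ, 0 ≤ t →
      (e (i + 1) t = ∫ s in (0 : ℝ)..t, NormedSpace.exp ((t - s) • A) (B (e i s))) ∧
      ‖e i t‖ ≤ (Real.exp (t * ‖A‖) * ‖B‖ * t) ^ i / i ! *
        (⨆ s : Set.Icc (0 : ℝ) t, ‖e 0 s‖) := by
  have hc_cont := continuous_splitting_iterate hcont hrec
  have he_fun : ∀ i, e i = fun t => exp (t • (A + B)) c₀ - c i t := fun i => funext (he i)
  have he_cont : ∀ i, Continuous (e i) := fun i => he_fun i ▸
    ((continuous_exp_smul (A + B)).clm_apply continuous_const).sub (hc_cont i)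
  have herr : ∀ i t, e (i + 1) t = duhamelIntegral A (fun s => B (e i s)) t := fun i t => by
    rw [he_fun, he_fun]
    exact splitting_error_succ (hc_cont i) (hrec i) t
  exact fun i t ht => ⟨herr i t, norm_splitting_error_le he_cont herr ht i⟩

/-- Error recursion and factorial bound for the iterative splitting scheme:
    with c_{i+1}(t) = exp(tA)c₀ + ∫₀ᵗ exp((t−s)A) B c_i(s) ds and arbitrary continuous
    initial guess c_0(·) with c_0(0) = c₀, the errors e_i(t) = exp(t(A+B))c₀ − c_i(t)
    satisfy e_{i+1}(t) = ∫₀ᵗ exp((t−s)A) B e_i(s) ds and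
    ‖e_i(t)‖ ≤ (Kt)^i/i! · sup_{s∈[0,t]} ‖e_0(s)‖ with K = e^{t‖A‖}‖B‖. -/
theorem stmt8 (X : Type*) [NormedAddCommGroup X] [NormedSpace ℝ X] [CompleteSpace X]
    (A B : X →L[ℝ] X) (c₀ : X)
    (c : ℕ → ℝ → X) (hcont : Continuous (c 0)) (hinit : c 0 0 = c₀)
    (hrec : ∀ i : ℕ, ∀ t : ℝ, c (i + 1) t = NormedSpace.exp (t • A) c₀ +
      ∫ s in (0 : ℝ)..t, NormedSpace.exp ((t - s) • A) (B (c i s)))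
    (e : ℕ → ℝ → X)
    (he : ∀ i : ℕ, ∀ t : ℝ, e i t = NormedSpace.exp (t • (A + B)) c₀ - c i t) :
    ∀ i : ℕ, ∀ t : ℝ, 0 ≤ t →
      (e (i + 1) t = ∫ s in (0 : ℝ)..t, NormedSpace.exp ((t - s) • A) (B (e i s))) ∧
      ‖e i t‖ ≤ (Real.exp (t * ‖A‖) * ‖B‖ * t) ^ i / i ! *
        (⨆ s : Set.Icc (0 : ℝ) t, ‖e 0 s‖) :=
  stmt8_general X A B c₀ c hcont hrec e he
end

section
/- Let A, B be bounded operators on a Banach space and define the one-sided iterative splitting c_i' = A c_i + B c_{i-1}, c_i(0) = c_0, with constant initialization c_0(t) ≡ c_0. Then ||exp(t(A+B)) c_0 - c_i(t)|| ≤ C t^i ||c_0|| for each fixed i ≥ 1, uniformly for t in a bounded interval, with C depending on i, ||A||, ||B||, T. -/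
/-!
The exact solution `u t = exp (t • (A + B)) c₀` satisfies the same variation-of-constants
formula as the iterates (Duhamel), i.e. it is a fixed point of the splitting step. Hence the
error `u - c i` is `∫₀ᵗ exp ((t - s) • A) (B (u s - c (i-1) s)) ds`, and each iteration gains a
factor `exp (T ‖A‖) ‖B‖ t / i`, starting from `‖u t - c₀‖ ≤ (exp (T ‖A + B‖) + 1) ‖c₀‖`.
-/

open MeasureTheory NormedSpace

theorem norm_integral_le_of_norm_le_mul_pow {E : Type*} [NormedAddCommGroup E] [NormedSpace ℝ E]
    {f : ℝ → E} {M t : ℝ} (j : ℕ) (ht : 0 ≤ t) (hf : ∀ s ∈ Set.Ioc 0 t, ‖f s‖ ≤ M * s ^ j) :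
    ‖∫ s in 0..t, f s‖ ≤ M * t ^ (j + 1) / (j + 1) := by
  calc ‖∫ s in 0..t, f s‖ ≤ ∫ s in 0..t, M * s ^ j :=
        intervalIntegral.norm_integral_le_of_norm_le ht (Filter.Eventually.of_forall hf)
          ((by fun_prop : Continuous fun s : ℝ => M * s ^ j).intervalIntegrable _ _)
    _ = M * t ^ (j + 1) / (j + 1) := by
        rw [intervalIntegral.integral_const_mul, integral_pow]
        ring

section Operator

variable {X : Type*} [NormedAddCommGroup X] [NormedSpace ℝ X]

theorem norm_exp_le_exp_norm (M : X →L[ℝ] X) : ‖exp M‖ ≤ Real.exp ‖M‖ := by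
  rw [exp_eq_tsum ℝ, Real.exp_eq_exp_ℝ, exp_eq_tsum ℝ]
  refine (norm_tsum_le_tsum_norm (norm_expSeries_summable' (𝕂 := ℝ) M)).trans ?_
  refine Summable.tsum_le_tsum (fun n => ?_) (norm_expSeries_summable' (𝕂 := ℝ) M)
    (expSeries_summable' (𝕂 := ℝ) ‖M‖)
  have hpow : ‖M ^ n‖ ≤ ‖M‖ ^ n := by
    cases n with
    | zero => simpa [ContinuousLinearMap.one_def] using ContinuousLinearMap.norm_id_le
    | succ m => exact norm_pow_le' M (Nat.succ_pos m)
  refine (norm_smul_le ((n.factorial : ℝ)⁻¹) (M ^ n)).trans ?_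
  rw [smul_eq_mul, norm_inv, Real.norm_natCast]
  gcongr

theorem norm_exp_smul_le (A : X →L[ℝ] X) {t T : ℝ} (h : |t| ≤ T) :
    ‖exp (t • A)‖ ≤ Real.exp (T * ‖A‖) := by
  refine (norm_exp_le_exp_norm _).trans (Real.exp_le_exp.2 ((norm_smul_le t A).trans ?_))
  rw [Real.norm_eq_abs]
  gcongr

theorem norm_exp_smul_apply_sub_le (D : X →L[ℝ] X) (c₀ : X) {t T : ℝ} (ht : |t| ≤ T) :
    ‖exp (t • D) c₀ - c₀‖ ≤ (Real.exp (T * ‖D‖) + 1) * ‖c₀‖ :=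
  calc ‖exp (t • D) c₀ - c₀‖ ≤ ‖exp (t • D)‖ * ‖c₀‖ + ‖c₀‖ :=
        (norm_sub_le _ _).trans (by gcongr; exact (exp (t • D)).le_opNorm c₀)
    _ ≤ Real.exp (T * ‖D‖) * ‖c₀‖ + ‖c₀‖ := by gcongr; exact norm_exp_smul_le D ht
    _ = (Real.exp (T * ‖D‖) + 1) * ‖c₀‖ := by ring

variable [CompleteSpace X]

@[fun_prop]
theorem Continuous.exp_smul_const {α : Type*} [TopologicalSpace α] (A : X →L[ℝ] X) {f : α → ℝ}
    (hf : Continuous f) : Continuous fun x => exp (f x • A) :=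
  (continuous_iff_continuousAt.2 fun t => (hasDerivAt_exp_smul_const A t).continuousAt).comp hf

theorem hasDerivAt_exp_sub_smul_apply_exp_smul_add_apply (A B : X →L[ℝ] X) (c₀ : X) (t s : ℝ) :
    HasDerivAt (fun s : ℝ => exp ((t - s) • A) (exp (s • (A + B)) c₀))
      (exp ((t - s) • A) (B (exp (s • (A + B)) c₀))) s := by
  have hleft : HasDerivAt (fun s : ℝ => exp ((t - s) • A)) (-(exp ((t - s) • A) * A)) s := by
    simpa [Function.comp_def] using
      (hasDerivAt_exp_smul_const A (t - s)).scomp s ((hasDerivAt_id s).const_sub t)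
  have hright :
      HasDerivAt (fun s : ℝ => exp (s • (A + B)) c₀) ((A + B) (exp (s • (A + B)) c₀)) s := by
    simpa using (hasDerivAt_exp_smul_const' (A + B) s).clm_apply (hasDerivAt_const s c₀)
  convert hleft.clm_apply hright using 1
  simp only [neg_apply, mul_apply_eq_comp, add_apply, map_add]
  abel

noncomputable def splittingStep (A B : X →L[ℝ] X) (c₀ : X) (f : ℝ → X) (t : ℝ) : X :=
  exp (t • A) c₀ + ∫ s in 0..t, exp ((t - s) • A) (B (f s))

theorem continuous_splittingStep (A B : X →L[ℝ] X) (c₀ : X) {f : ℝ → X} (hf : Continuous f) :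
    Continuous (splittingStep A B c₀ f) := by
  have hint : Continuous (Function.uncurry fun t s : ℝ => exp ((t - s) • A) (B (f s))) := by
    fun_prop
  exact ((continuous_id.exp_smul_const A).clm_apply continuous_const).add
    (intervalIntegral.continuous_parametric_intervalIntegral_of_continuous hint continuous_id)

theorem splittingStep_exp_smul_add_apply (A B : X →L[ℝ] X) (c₀ : X) (t : ℝ) :
    splittingStep A B c₀ (fun s => exp (s • (A + B)) c₀) t = exp (t • (A + B)) c₀ := by
  have hcont : Continuous fun s : ℝ => exp ((t - s) • A) (B (exp (s • (A + B)) c₀)) := by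
    fun_prop
  rw [splittingStep, intervalIntegral.integral_eq_sub_of_hasDerivAt
    (fun s _ => hasDerivAt_exp_sub_smul_apply_exp_smul_add_apply A B c₀ t s)
    (hcont.intervalIntegrable 0 t)]
  simp

theorem splittingStep_sub_splittingStep (A B : X →L[ℝ] X) (c₀ : X) {f g : ℝ → X}
    (hf : Continuous f) (hg : Continuous g) (t : ℝ) :
    splittingStep A B c₀ f t - splittingStep A B c₀ g t =
      ∫ s in 0..t, exp ((t - s) • A) (B (f s - g s)) := by
  have hfi : Continuous fun s => exp ((t - s) • A) (B (f s)) := by fun_prop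
  have hgi : Continuous fun s => exp ((t - s) • A) (B (g s)) := by fun_prop
  simp only [splittingStep, map_sub, add_sub_add_left_eq_sub]
  rw [intervalIntegral.integral_sub (hfi.intervalIntegrable 0 t) (hgi.intervalIntegrable 0 t)]

theorem norm_splittingStep_sub_le (A B : X →L[ℝ] X) (c₀ : X) {f g : ℝ → X}
    (hf : Continuous f) (hg : Continuous g) {T M : ℝ} (j : ℕ)
    (hfg : ∀ s ∈ Set.Icc 0 T, ‖f s - g s‖ ≤ M * s ^ j) {t : ℝ} (ht : t ∈ Set.Icc 0 T) :
    ‖splittingStep A B c₀ f t - splittingStep A B c₀ g t‖ ≤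
      Real.exp (T * ‖A‖) * ‖B‖ * M * t ^ (j + 1) / (j + 1) := by
  rw [splittingStep_sub_splittingStep A B c₀ hf hg]
  refine norm_integral_le_of_norm_le_mul_pow j ht.1 fun s hs => ?_
  have hexp : ‖exp ((t - s) • A)‖ ≤ Real.exp (T * ‖A‖) :=
    norm_exp_smul_le A (by rw [abs_of_nonneg (sub_nonneg.2 hs.2)]; linarith [hs.1, ht.2])
  calc ‖exp ((t - s) • A) (B (f s - g s))‖ ≤ ‖exp ((t - s) • A)‖ * (‖B‖ * ‖f s - g s‖) :=
        (ContinuousLinearMap.le_opNorm _ _).trans (by gcongr; exact B.le_opNorm _)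
    _ ≤ Real.exp (T * ‖A‖) * (‖B‖ * (M * s ^ j)) := by
        gcongr
        exact hfg s ⟨hs.1.le, hs.2.trans ht.2⟩
    _ = Real.exp (T * ‖A‖) * ‖B‖ * M * s ^ j := by ring

section Iterates

variable (A B : X →L[ℝ] X) (c₀ : X) {c : ℕ → ℝ → X}

theorem continuous_iterate (hinit : ∀ t, c 0 t = c₀)
    (hstep : ∀ j, c (j + 1) = splittingStep A B c₀ (c j)) (j : ℕ) : Continuous (c j) := by
  induction j with
  | zero => simpa only [funext hinit] using continuous_const
  | succ j ih => simpa only [hstep] using continuous_splittingStep A B c₀ ih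

theorem norm_exp_smul_add_apply_sub_iterate_le (hinit : ∀ t, c 0 t = c₀)
    (hstep : ∀ j, c (j + 1) = splittingStep A B c₀ (c j)) (T : ℝ) (j : ℕ) :
    ∀ t ∈ Set.Icc 0 T, ‖exp (t • (A + B)) c₀ - c j t‖ ≤
      (Real.exp (T * ‖A + B‖) + 1) * (Real.exp (T * ‖A‖) * ‖B‖) ^ j / j.factorial * t ^ j *
        ‖c₀‖ := by
  induction j with
  | zero =>
    intro t ht
    simpa [hinit] using
      norm_exp_smul_apply_sub_le (A + B) c₀ ((abs_of_nonneg ht.1).trans_le ht.2)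
  | succ j ih =>
    intro t ht
    rw [hstep, ← splittingStep_exp_smul_add_apply A B c₀ t]
    refine (norm_splittingStep_sub_le A B c₀ (by fun_prop)
      (continuous_iterate A B c₀ hinit hstep j)
      (M := (Real.exp (T * ‖A + B‖) + 1) * (Real.exp (T * ‖A‖) * ‖B‖) ^ j / j.factorial * ‖c₀‖)
      j (fun s hs => (ih s hs).trans_eq (by ring)) ht).trans_eq ?_
    rw [Nat.factorial_succ]
    push_cast
    field_simp
    ring

end Iterates

end Operator

theorem stmt9_general (X : Type*) [NormedAddCommGroup X] [NormedSpace ℝ X] [CompleteSpace X]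
    (A B : X →L[ℝ] X) (c₀ : X) (T : ℝ)
    (c : ℕ → ℝ → X) (hinit : ∀ t : ℝ, c 0 t = c₀)
    (hrec : ∀ i : ℕ, ∀ t : ℝ, c (i + 1) t = NormedSpace.exp (t • A) c₀ +
      ∫ s in (0 : ℝ)..t, NormedSpace.exp ((t - s) • A) (B (c i s)))
    (i : ℕ) :
    ∃ C : ℝ, 0 ≤ C ∧ ∀ t ∈ Set.Icc (0 : ℝ) T,
      ‖NormedSpace.exp (t • (A + B)) c₀ - c i t‖ ≤ C * t ^ i * ‖c₀‖ :=
  ⟨_, by positivity,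
    norm_exp_smul_add_apply_sub_iterate_le A B c₀ hinit (fun j => funext (hrec j)) T i⟩

/-- One-sided iterative splitting with constant initialization c_0(t) ≡ c₀:
    ‖exp(t(A+B))c₀ − c_i(t)‖ ≤ C tⁱ ‖c₀‖ on [0,T] for each i ≥ 1. -/
theorem stmt9 (X : Type*) [NormedAddCommGroup X] [NormedSpace ℝ X] [CompleteSpace X]
    (A B : X →L[ℝ] X) (c₀ : X) (T : ℝ) (hT : 0 < T)
    (c : ℕ → ℝ → X) (hinit : ∀ t : ℝ, c 0 t = c₀)
    (hrec : ∀ i : ℕ, ∀ t : ℝ, c (i + 1) t = NormedSpace.exp (t • A) c₀ +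
      ∫ s in (0 : ℝ)..t, NormedSpace.exp ((t - s) • A) (B (c i s)))
    (i : ℕ) (hi : 1 ≤ i) :
    ∃ C : ℝ, 0 ≤ C ∧ ∀ t ∈ Set.Icc (0 : ℝ) T,
      ‖NormedSpace.exp (t • (A + B)) c₀ - c i t‖ ≤ C * t ^ i * ‖c₀‖ :=
  stmt9_general X A B c₀ T c hinit hrec i
end
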